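/- Let h be a gauge function for which there exist constants c > 0 and ε > 0 with h(2^{-j-k})/h(2^{-j}) ≥ c·2^{-(n-ε)k} for all j, k ∈ ℕ₀. Then lim_{r→0} r^n / h(r) = 0. Consequently, an h-set Γ ⊂ ℝⁿ satisfying the porosity condition has Lebesgue measure zero. -/

import Mathlib

open Filter Real MeasureTheory Metric Set

/-- `h` is a gauge function: positive, continuous, non-decreasing on `(0,1]`,
with `h(r) → 0` as `r → 0`. -/
def GaugeFunction (h : ℝ → ℝ) : Prop :=
  (∀ r ∈ Set.Ioc (0 : ℝ) 1, 0 < h r) ∧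
  ContinuousOn h (Set.Ioc (0 : ℝ) 1) ∧
  MonotoneOn h (Set.Ioc (0 : ℝ) 1) ∧
  Tendsto h (nhdsWithin 0 (Set.Ioi 0)) (nhds 0)

/-- `Γ` is an `h`-set with associated finite Radon measure `μ`. -/
def IsHSet {n : ℕ} (h : ℝ → ℝ) (Γ : Set (EuclideanSpace ℝ (Fin n)))
    (μ : Measure (EuclideanSpace ℝ (Fin n))) : Prop :=
  Γ.Nonempty ∧ IsCompact Γ ∧ IsFiniteMeasure μ ∧
  μ Γᶜ = 0 ∧ (∀ γ ∈ Γ, ∀ r : ℝ, 0 < r → 0 < μ (Metric.ball γ r)) ∧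
  ∃ c₁ c₂ : ℝ, 0 < c₁ ∧ 0 < c₂ ∧ ∀ γ ∈ Γ, ∀ r ∈ Set.Ioc (0 : ℝ) 1,
    ENNReal.ofReal (c₁ * h r) ≤ μ (Metric.closedBall γ r) ∧
    μ (Metric.closedBall γ r) ≤ ENNReal.ofReal (c₂ * h r)

open scoped NNReal ENNReal Topology

/-! Taking `j = 0` in the criterion gives `h(2⁻ᵏ) ≥ c h(1) 2^{-(n-ε)k}`. If `2⁻ᵏ < r ≤ 2^{1-k}`,
monotonicity of `h` yields `rⁿ / h(r) ≤ 2ⁿ 2^{-kn} / (c h(1) 2^{-(n-ε)k}) ≤ (2ⁿ / (c h(1))) r^ε`,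
which tends to `0`.

For an `h`-set `Γ` with measure `μ`, the Lebesgue measure of `B(γ, r)`, `γ ∈ Γ`, is a constant
times `rⁿ`, while `μ (B(γ, r)) ≳ h(r)`; so for every `a > 0` small balls centred on `Γ` satisfy
`|B| ≤ a μ(B)`. The Besicovitch covering theorem turns this into `|Γ| ≤ a μ(Γ)`, hence `|Γ| = 0`. -/

theorem dyadic_lower_bound_of_porosity {h : ℝ → ℝ} {n : ℕ} {c ε : ℝ}
    (hpor : ∀ j k : ℕ,
      c * 2 ^ (-(((n : ℝ) - ε) * k)) ≤ h (2 ^ (-((j : ℝ) + k))) / h (2 ^ (-(j : ℝ))))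
    (h1 : 0 < h 1) (k : ℕ) :
    c * h 1 * ((1 / 2 : ℝ) ^ k) ^ ((n : ℝ) - ε) ≤ h ((1 / 2) ^ k) := by
  have h2k : (2 : ℝ) ^ (-(k : ℝ)) = (1 / 2) ^ k := by
    rw [rpow_neg zero_le_two, rpow_natCast, one_div, inv_pow]
  have hscale : (2 : ℝ) ^ (-(((n : ℝ) - ε) * k)) = ((1 / 2 : ℝ) ^ k) ^ ((n : ℝ) - ε) := by
    rw [← h2k, ← rpow_mul zero_le_two]
    ring_nf
  have hk := hpor 0 k
  rw [Nat.cast_zero, zero_add, neg_zero, rpow_zero, h2k, hscale, le_div_iff₀ h1] at hk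
  linarith

section Dyadic

variable {h : ℝ → ℝ} {n : ℕ} {C ε : ℝ}

theorem pow_div_le_mul_rpow_of_dyadic (hC : 0 < C) (hε : 0 ≤ ε)
    (hmono : MonotoneOn h (Ioc 0 1))
    (hdyadic : ∀ k : ℕ, C * ((1 / 2 : ℝ) ^ k) ^ ((n : ℝ) - ε) ≤ h ((1 / 2) ^ k))
    {r : ℝ} (hr : r ∈ Ioc 0 1) : r ^ n / h r ≤ 2 ^ n / C * r ^ ε := by
  obtain ⟨k, hkr, hrk⟩ := exists_nat_pow_near_of_lt_one hr.1 hr.2 one_half_pos one_half_lt_one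
  set t : ℝ := (1 / 2) ^ (k + 1)
  have ht : 0 < t := by positivity
  have hrt : r ≤ 2 * t := by
    simp only [t, pow_succ]
    linarith
  have hht : C * t ^ ((n : ℝ) - ε) ≤ h r :=
    (hdyadic (k + 1)).trans (hmono ⟨ht, (hkr.trans_le hr.2).le⟩ hr hkr.le)
  have hpow : t ^ n = t ^ ((n : ℝ) - ε) * t ^ ε := by
    rw [← rpow_add ht, sub_add_cancel, rpow_natCast]
  calc r ^ n / h r ≤ (2 * t) ^ n / (C * t ^ ((n : ℝ) - ε)) :=
        div_le_div₀ (by positivity) (pow_le_pow_left₀ hr.1.le hrt n) (by positivity) hht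
    _ = 2 ^ n / C * t ^ ε := by
        rw [mul_pow, hpow]
        field_simp
    _ ≤ 2 ^ n / C * r ^ ε := by gcongr

theorem tendsto_pow_div_of_dyadic (hC : 0 < C) (hε : 0 < ε)
    (hpos : ∀ r ∈ Ioc 0 1, 0 < h r) (hmono : MonotoneOn h (Ioc 0 1))
    (hdyadic : ∀ k : ℕ, C * ((1 / 2 : ℝ) ^ k) ^ ((n : ℝ) - ε) ≤ h ((1 / 2) ^ k)) :
    Tendsto (fun r : ℝ => r ^ n / h r) (𝓝[>] 0) (𝓝 0) := by
  have hbound : Tendsto (fun r : ℝ => 2 ^ n / C * r ^ ε) (𝓝[>] 0) (𝓝 0) := by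
    simpa [zero_rpow hε.ne'] using
      ((continuousAt_rpow_const 0 ε (Or.inr hε.le)).tendsto.mono_left
        nhdsWithin_le_nhds).const_mul (2 ^ n / C)
  refine squeeze_zero' ?_ ?_ hbound
  · filter_upwards [Ioc_mem_nhdsGT one_pos] with r hr
    exact div_nonneg (pow_nonneg hr.1.le n) (hpos r hr).le
  · filter_upwards [Ioc_mem_nhdsGT one_pos] with r hr
    exact pow_div_le_mul_rpow_of_dyadic hC hε.le hmono hdyadic hr

end Dyadic

namespace Besicovitch

variable {α : Type*} [MetricSpace α] [MeasurableSpace α] [BorelSpace α]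
  [SecondCountableTopology α] [HasBesicovitchCovering α]
  (μ ν : Measure α) [SFinite μ] [IsLocallyFiniteMeasure ν] {s : Set α}

theorem measure_le_smul_of_frequently_le (a : ℝ≥0)
    (hs : ∀ x ∈ s, ∃ᶠ r in 𝓝[>] 0, μ (closedBall x r) ≤ a * ν (closedBall x r)) :
    μ s ≤ a * ν s :=
  (Besicovitch.vitaliFamily μ).measure_le_of_frequently_le (a • ν) .rfl s fun x hx =>
    (tendsto_filterAt μ x).frequently (hs x hx)

theorem measure_eq_zero_of_frequently_le_smul (hνs : ν s ≠ ∞)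
    (hs : ∀ a : ℝ≥0, 0 < a → ∀ x ∈ s,
      ∃ᶠ r in 𝓝[>] 0, μ (closedBall x r) ≤ a * ν (closedBall x r)) :
    μ s = 0 := by
  have hlim : Tendsto (fun a : ℝ≥0 => (a : ℝ≥0∞) * ν s) (𝓝[>] 0) (𝓝 0) := by
    simpa using ENNReal.Tendsto.mul_const
      (ENNReal.tendsto_coe.2 (tendsto_id.mono_left (nhdsWithin_le_nhds (a := (0 : ℝ≥0)))))
      (Or.inr hνs)
  refine nonpos_iff_eq_zero.1 (ge_of_tendsto hlim ?_)
  filter_upwards [self_mem_nhdsWithin] with a ha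
  exact measure_le_smul_of_frequently_le μ ν a (hs a ha)

end Besicovitch

namespace IsHSet

variable {n : ℕ} {h : ℝ → ℝ} {Γ : Set (EuclideanSpace ℝ (Fin n))}
  {μ : Measure (EuclideanSpace ℝ (Fin n))}

theorem gauge_pos (hΓ : IsHSet h Γ μ) {r : ℝ} (hr : r ∈ Ioc 0 1) : 0 < h r := by
  obtain ⟨⟨γ, hγ⟩, -, -, -, hball, c₁, c₂, -, hc₂, hbounds⟩ := hΓ
  have hμ : 0 < ENNReal.ofReal (c₂ * h r) :=
    (hball γ hγ r hr.1).trans_le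
      ((measure_mono ball_subset_closedBall).trans (hbounds γ hγ r hr).2)
  exact pos_of_mul_pos_right (ENNReal.ofReal_pos.1 hμ) hc₂.le

theorem volume_eq_zero (hΓ : IsHSet h Γ μ)
    (hlim : Tendsto (fun r : ℝ => r ^ n / h r) (𝓝[>] 0) (𝓝 0)) : volume Γ = 0 := by
  obtain ⟨-, -, hfin, -, -, c₁, _, hc₁, -, hbounds⟩ := id hΓ
  have : IsFiniteMeasure μ := hfin
  refine Besicovitch.measure_eq_zero_of_frequently_le_smul volume μ (measure_ne_top μ Γ)
    fun a ha x hx => ?_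
  set V := volume (ball (0 : EuclideanSpace ℝ (Fin n)) 1)
  have hV : 0 < V.toReal :=
    ENNReal.toReal_pos (measure_ball_pos _ _ one_pos).ne' measure_ball_lt_top.ne
  have hsmall : ∀ᶠ r in 𝓝[>] 0, r ^ n / h r < a * c₁ / V.toReal :=
    hlim.eventually (gt_mem_nhds (by positivity))
  refine (hsmall.and (Ioc_mem_nhdsGT one_pos)).frequently.mono fun r ⟨hr, hr1⟩ => ?_
  rw [div_lt_div_iff₀ (hΓ.gauge_pos hr1) hV] at hr
  calc volume (closedBall x r) = ENNReal.ofReal (r ^ n * V.toReal) := by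
        rw [Measure.addHaar_closedBall _ _ hr1.1.le, finrank_euclideanSpace_fin,
          ENNReal.ofReal_mul (pow_nonneg hr1.1.le n),
          ENNReal.ofReal_toReal measure_ball_lt_top.ne]
    _ ≤ ENNReal.ofReal (a * (c₁ * h r)) := ENNReal.ofReal_le_ofReal (by linarith)
    _ = a * ENNReal.ofReal (c₁ * h r) := by
        rw [ENNReal.ofReal_mul a.coe_nonneg, ENNReal.ofReal_coe_nnreal]
    _ ≤ a * μ (closedBall x r) := by gcongr; exact (hbounds x hx r hr1).1

end IsHSet

theorem porosity_criterion_implies_null_general {n : ℕ} (h : ℝ → ℝ)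
    (hgauge : GaugeFunction h)
    (hporo : ∃ c ε : ℝ, 0 < c ∧ 0 < ε ∧ ∀ j k : ℕ,
      c * 2 ^ (-(((n : ℝ) - ε) * k)) ≤ h (2 ^ (-((j : ℝ) + k))) / h (2 ^ (-(j : ℝ)))) :
    Tendsto (fun r : ℝ => r ^ (n : ℕ) / h r) (nhdsWithin 0 (Set.Ioi 0)) (nhds 0) ∧
    ∀ (Γ : Set (EuclideanSpace ℝ (Fin n))) (μ : Measure (EuclideanSpace ℝ (Fin n))),
      IsHSet h Γ μ → volume Γ = 0 := by
  obtain ⟨c, ε, hc, hε, hpor⟩ := hporo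
  obtain ⟨hpos, -, hmono, -⟩ := hgauge
  have h1 : 0 < h 1 := hpos 1 ⟨one_pos, le_rfl⟩
  have hlim : Tendsto (fun r : ℝ => r ^ n / h r) (𝓝[>] 0) (𝓝 0) :=
    tendsto_pow_div_of_dyadic (mul_pos hc h1) hε hpos hmono
      (dyadic_lower_bound_of_porosity hpor h1)
  exact ⟨hlim, fun Γ μ hΓ => hΓ.volume_eq_zero hlim⟩

theorem porosity_criterion_implies_null {n : ℕ} (hn : 0 < n) (h : ℝ → ℝ)
    (hgauge : GaugeFunction h)
    (hporo : ∃ c ε : ℝ, 0 < c ∧ 0 < ε ∧ ∀ j k : ℕ,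
      c * 2 ^ (-(((n : ℝ) - ε) * k)) ≤ h (2 ^ (-((j : ℝ) + k))) / h (2 ^ (-(j : ℝ)))) :
    Tendsto (fun r : ℝ => r ^ (n : ℕ) / h r) (nhdsWithin 0 (Set.Ioi 0)) (nhds 0) ∧
    ∀ (Γ : Set (EuclideanSpace ℝ (Fin n))) (μ : Measure (EuclideanSpace ℝ (Fin n))),
      IsHSet h Γ μ → volume Γ = 0 :=
  porosity_criterion_implies_null_general h hgauge hporo
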